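/- arXiv:1407.2926 — 3 statements merged into one kernel-verified Lean document; each statement's English description precedes it below -/
import Mathlib

section
/- Let {h_j} be a finite family of pairwise commuting hermitian projectors on a finite-dimensional Hilbert space, and let ψ be a unit vector with h_j ψ = ψ for all j. Suppose N and O are operators commuting with every h_j, and suppose there exists a finite product P of some of the h_j's with NP = 0. Then for any bipartition with respect to which the twist product is taken, ⟨ψ, (N ∞ O) ψ⟩ = 0, provided each h_j is supported on only one tensor factor (i.e., h_j = h_j^M ⊗ I or h_j = I ⊗ h_j^{M'}). -/
open scoped BigOperators Kronecker
open Matrix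

/-- The twist product of bipartite operators on `H_M ⊗ H_{M'}`. -/
noncomputable def twist {m m' : Type*} [Fintype m] [Fintype m']
    (P Q : Matrix (m × m') (m × m') ℂ) : Matrix (m × m') (m × m') ℂ :=
  Matrix.of fun p q => ∑ k : m, ∑ k' : m', P (p.1, k') (k, q.2) * Q (k, p.2) (q.1, k')

section Aux

variable {m m' : Type*} [Fintype m] [DecidableEq m] [Fintype m'] [DecidableEq m']

lemma twist_mul_kron_one (N O : Matrix (m × m') (m × m') ℂ) (b : Matrix m' m' ℂ) :
    twist (N * ((1 : Matrix m m ℂ) ⊗ₖ b)) O = twist N O * ((1 : Matrix m m ℂ) ⊗ₖ b) := by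
  ext p q
  simp only [twist, Matrix.mul_apply, Matrix.of_apply, kroneckerMap_apply, one_apply,
    Fintype.sum_prod_type]
  simp [Finset.mul_sum, Finset.sum_mul, mul_ite, ite_mul, mul_comm, mul_left_comm]
  conv_lhs => rw [Finset.sum_congr rfl (fun x _ => Finset.sum_comm)]
  rw [Finset.sum_comm]
  simp [mul_assoc]

lemma twist_mul_kron_a (N O : Matrix (m × m') (m × m') ℂ) (a : Matrix m m ℂ) :
    twist (N * (a ⊗ₖ (1 : Matrix m' m' ℂ))) O = twist N ((a ⊗ₖ (1 : Matrix m' m' ℂ)) * O) := by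
  ext p q
  simp only [twist, Matrix.mul_apply, Matrix.of_apply, kroneckerMap_apply, one_apply,
    Fintype.sum_prod_type]
  simp [Finset.mul_sum, Finset.sum_mul, mul_ite, ite_mul, mul_comm, mul_left_comm]
  conv_lhs => rw [Finset.sum_congr rfl (fun x _ => Finset.sum_comm)]
  rw [Finset.sum_comm]
  conv_rhs => rw [Finset.sum_congr rfl (fun x _ => Finset.sum_comm)]
  simp [mul_assoc]

lemma twist_kron_a_right (N O : Matrix (m × m') (m × m') ℂ) (a : Matrix m m ℂ) :
    twist N (O * (a ⊗ₖ (1 : Matrix m' m' ℂ))) = twist N O * (a ⊗ₖ (1 : Matrix m' m' ℂ)) := by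
  ext p q
  simp only [twist, Matrix.mul_apply, Matrix.of_apply, kroneckerMap_apply, one_apply,
    Fintype.sum_prod_type]
  simp [Finset.mul_sum, Finset.sum_mul, mul_ite, ite_mul, mul_comm, mul_left_comm]
  conv_lhs => rw [Finset.sum_congr rfl (fun x _ => Finset.sum_comm)]
  rw [Finset.sum_comm]
  simp [mul_assoc]

lemma twist_mul_proj (N O g : Matrix (m × m') (m × m') ℂ)
    (hfact : (∃ a : Matrix m m ℂ, g = a ⊗ₖ (1 : Matrix m' m' ℂ)) ∨
      (∃ b : Matrix m' m' ℂ, g = (1 : Matrix m m ℂ) ⊗ₖ b))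
    (hOg : O * g = g * O) :
    twist (N * g) O = twist N O * g := by
  rcases hfact with ⟨a, rfl⟩ | ⟨b, rfl⟩
  · rw [twist_mul_kron_a, ← hOg, twist_kron_a_right]
  · exact twist_mul_kron_one N O b

lemma twist_mul_list (N O : Matrix (m × m') (m × m') ℂ) (L : List (Matrix (m × m') (m × m') ℂ))
    (hfact : ∀ g ∈ L, (∃ a : Matrix m m ℂ, g = a ⊗ₖ (1 : Matrix m' m' ℂ)) ∨
      (∃ b : Matrix m' m' ℂ, g = (1 : Matrix m m ℂ) ⊗ₖ b))
    (hOg : ∀ g ∈ L, O * g = g * O) :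
    twist (N * L.prod) O = twist N O * L.prod := by
  induction L generalizing N with
  | nil => simp
  | cons g L ih =>
    rw [List.prod_cons, ← mul_assoc,
      ih (N * g) (fun x hx => hfact x (List.mem_cons_of_mem _ hx))
        (fun x hx => hOg x (List.mem_cons_of_mem _ hx)),
      twist_mul_proj N O g (hfact g List.mem_cons_self) (hOg g List.mem_cons_self),
      mul_assoc]

lemma twist_zero (O : Matrix (m × m') (m × m') ℂ) :
    twist (0 : Matrix (m × m') (m × m') ℂ) O = 0 := by
  ext p q
  simp [twist]

end Aux

/-- If `N` is annihilated by a product of the commuting projectors `h j`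
stabilizing the unit vector `ψ`, each supported on one tensor factor, and
`N`, `O` commute with every `h j`, then the twist pairing `⟨ψ, (N ∞ O) ψ⟩` vanishes. -/
theorem twist_pairing_null {m m' : Type*}
    [Fintype m] [DecidableEq m] [Fintype m'] [DecidableEq m']
    {nJ : ℕ} (h : Fin nJ → Matrix (m × m') (m × m') ℂ)
    (ψ : m × m' → ℂ) (hunit : star ψ ⬝ᵥ ψ = 1)
    (hcomm : ∀ i j, h i * h j = h j * h i)
    (hproj : ∀ j, h j * h j = h j)
    (hherm : ∀ j, (h j)ᴴ = h j)
    (hground : ∀ j, (h j).mulVec ψ = ψ)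
    (hfactor : ∀ j, (∃ a : Matrix m m ℂ, h j = a ⊗ₖ (1 : Matrix m' m' ℂ)) ∨
      (∃ b : Matrix m' m' ℂ, h j = (1 : Matrix m m ℂ) ⊗ₖ b))
    (N O : Matrix (m × m') (m × m') ℂ)
    (hN : ∀ j, N * h j = h j * N)
    (hO : ∀ j, O * h j = h j * O)
    (hnull : ∃ l : List (Fin nJ), N * (l.map h).prod = 0) :
    star ψ ⬝ᵥ (twist N O).mulVec ψ = 0 := by
  obtain ⟨l, hl⟩ := hnull
  have hprodψ : ∀ l' : List (Fin nJ), ((l'.map h).prod).mulVec ψ = ψ := by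
    intro l'
    induction l' with
    | nil => simp [Matrix.one_mulVec]
    | cons j l ih =>
      rw [List.map_cons, List.prod_cons, ← Matrix.mulVec_mulVec, ih, hground]
  have hkey : twist N O * (l.map h).prod = 0 := by
    rw [← twist_mul_list N O (l.map h)
      (by intro g hg; obtain ⟨j, _, rfl⟩ := List.mem_map.mp hg; exact hfactor j)
      (by intro g hg; obtain ⟨j, _, rfl⟩ := List.mem_map.mp hg; exact hO j),
      hl, twist_zero]
  calc star ψ ⬝ᵥ (twist N O).mulVec ψ
      = star ψ ⬝ᵥ (twist N O).mulVec (((l.map h).prod).mulVec ψ) := by rw [hprodψ l]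
    _ = star ψ ⬝ᵥ (twist N O * (l.map h).prod).mulVec ψ := by rw [Matrix.mulVec_mulVec]
    _ = 0 := by rw [hkey]; simp
end

section
/- Let s₁, ..., s_m be pairwise commuting tensor products of Pauli matrices on n qubits, and let h_k = (1+s_k)/2. Suppose O is an operator with h₁⋯h_m O = 0 and m is minimal among all such products. If for some index j there exists a single-qubit Pauli matrix σ acting on a qubit touched by s_j but by no other s_k, with σ s_j = −s_j σ, then h₁⋯h_{j-1}h_{j+1}⋯h_m O = 0, contradicting minimality. Consequently, every s_k in a minimal annihilating product must be supported within the support of O's commutant-relevant region (formally: (1/2)Σ_{n=0}^{1} σⁿ(O·Π_k h_k)(σ†)ⁿ = O·Π_{k≠j} h_k). -/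
open scoped BigOperators
open Matrix

/-- Pauli-stabilizer argument: if `σ` anticommutes with `s j`, commutes with all
other `s k` and with `O`, and the product `h₁⋯h_m` annihilates `O`, then averaging
the conjugation by `σ` removes the factor `h j`, which therefore also
annihilates `O` (contradicting minimality of the annihilating product). -/
theorem pauli_minimal_product {n : Type*} [Fintype n] [DecidableEq n]
    {m : ℕ} (s : Fin m → Matrix n n ℂ)
    (hinv : ∀ k, s k * s k = 1)
    (hherm : ∀ k, (s k)ᴴ = s k)
    (hcomm : ∀ k l, s k * s l = s l * s k)
    (j : Fin m) (σ : Matrix n n ℂ)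
    (hσ2 : σ * σ = 1) (hσh : σᴴ = σ)
    (hanti : σ * s j = -(s j * σ))
    (hσcomm : ∀ k, k ≠ j → σ * s k = s k * σ)
    (O : Matrix n n ℂ)
    (hOcomm : ∀ k, O * s k = s k * O)
    (hOσ : σ * O = O * σ)
    (hprod :
      ((List.finRange m).map fun k => ((1 : ℂ)/2) • (1 + s k)).prod * O = 0) :
    (((1 : ℂ)/2) •
        (O * ((List.finRange m).map fun k => ((1 : ℂ)/2) • (1 + s k)).prod
          + σ * (O * ((List.finRange m).map fun k => ((1 : ℂ)/2) • (1 + s k)).prod) * σᴴ))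
      = O * (((List.finRange m).filter (fun k => k ≠ j)).map
          fun k => ((1 : ℂ)/2) • (1 + s k)).prod ∧
    O * (((List.finRange m).filter (fun k => k ≠ j)).map
        fun k => ((1 : ℂ)/2) • (1 + s k)).prod = 0 := by
  set h : Fin m → Matrix n n ℂ := fun k => ((1 : ℂ)/2) • (1 + s k) with hh
  set P : Matrix n n ℂ := ((List.finRange m).map h).prod with hP
  set Q : Matrix n n ℂ := (((List.finRange m).filter (fun k => k ≠ j)).map h).prod with hQ
  have hcommh : ∀ k l, Commute (h k) (h l) := fun k l =>
    (((Commute.one_left (1 + s l)).add_left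
      ((Commute.one_right (s k)).add_right (hcomm k l))).smul_left _).smul_right _
  have hOh : ∀ k, Commute O (h k) := fun k =>
    ((Commute.one_right O).add_right (hOcomm k)).smul_right _
  have hσhk : ∀ k, k ≠ j → Commute σ (h k) := fun k hk =>
    ((Commute.one_right σ).add_right (hσcomm k hk)).smul_right _
  -- P = Q * h j
  have hperm : List.Perm (List.finRange m) (j :: (List.finRange m).filter (fun k => k ≠ j)) := by
    have hmem : j ∈ List.finRange m := List.mem_finRange j
    have := List.perm_cons_erase hmem
    rw [(List.nodup_finRange m).erase_eq_filter] at this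
    refine this.trans (List.Perm.cons _ (List.Perm.of_eq ?_))
    apply List.filter_congr
    intro x _
    rw [Bool.eq_iff_iff]
    simp
  have hpair : ((List.finRange m).map h).Pairwise Commute :=
    List.Pairwise.map h (fun a b _ => hcommh a b) (List.nodup_finRange m)
  have hPQ : P = h j * Q := by
    have := (hperm.map h).prod_eq' hpair
    simpa [hP, hQ] using this
  have hQhj : Commute (h j) Q := by
    refine Commute.list_prod_right _ _ ?_
    intro y hy
    obtain ⟨k, -, rfl⟩ := List.mem_map.1 hy
    exact hcommh j k
  have hPQ' : P = Q * h j := by rw [hPQ, hQhj.eq]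
  have hOPc : Commute O P := by
    refine Commute.list_prod_right _ _ ?_
    intro y hy
    obtain ⟨k, -, rfl⟩ := List.mem_map.1 hy
    exact hOh k
  have hOP0 : O * P = 0 := by rw [hOPc.eq, hprod]
  have hσQ : Commute σ Q := by
    refine Commute.list_prod_right _ _ ?_
    intro y hy
    obtain ⟨k, hk, rfl⟩ := List.mem_map.1 hy
    exact hσhk k (by simpa using List.of_mem_filter hk)
  -- σ h j σ = (1/2)(1 - s j)
  have hσsjσ : σ * s j * σ = -(s j) := by
    rw [hanti, neg_mul, mul_assoc, hσ2, mul_one]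
  have hconj : σ * h j * σ = ((1 : ℂ)/2) • (1 - s j) := by
    have : σ * (1 + s j) * σ = 1 - s j := by
      rw [mul_add, mul_one, add_mul, hσ2, hσsjσ, sub_eq_add_neg]
    rw [hh]
    simp only [mul_smul_comm, smul_mul_assoc]
    rw [this]
  have hkey : h j + σ * h j * σ = 1 := by
    rw [hconj, hh]
    simp only [← smul_add]
    have : (1 + s j) + (1 - s j) = (2 : ℂ) • (1 : Matrix n n ℂ) := by
      rw [two_smul]; abel
    rw [this, smul_smul]
    norm_num
  have hOQ0 : O * Q = 0 := by
    have step : O * Q * (σ * h j * σ) = σ * (O * P) * σ := by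
      calc O * Q * (σ * h j * σ) = O * (Q * σ) * h j * σ := by
            simp only [mul_assoc]
        _ = σ * O * Q * h j * σ := by rw [← hσQ.eq]; simp only [← mul_assoc]; rw [← hOσ]
        _ = σ * (O * P) * σ := by rw [hPQ']; simp only [mul_assoc]
    calc O * Q = O * Q * (h j + σ * h j * σ) := by rw [hkey, mul_one]
      _ = O * P + σ * (O * P) * σ := by
          rw [mul_add, step, hPQ']
          simp only [mul_assoc]
      _ = 0 := by rw [hOP0, mul_zero, zero_mul, add_zero]
  refine ⟨?_, hOQ0⟩
  rw [hOP0, hOQ0]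
  simp
end

section
/- Let G and G' be finite abelian groups. If the d²×d² matrices S̃(G) and S̃(G'), defined by S̃(G)_{(g,χ),(g',χ')} = (1/|G|²)χ(g')χ'(g) for g,g' ∈ G and characters χ, χ' of G, are equal up to simultaneous permutation of rows and columns, then G ≅ G'. -/
open scoped BigOperators

open Finset

/-- Number of `n`-torsion points. -/
noncomputable def torsCount (H : Type*) [Monoid H] (n : ℕ) : ℕ :=
  Nat.card {x : H // x ^ n = 1}

lemma torsCount_congr {H K : Type*} [Monoid H] [Monoid K] (e : H ≃* K) (n : ℕ) :
    torsCount H n = torsCount K n := by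
  refine Nat.card_congr (e.toEquiv.subtypeEquiv fun x => ?_)
  show x ^ n = 1 ↔ e x ^ n = 1
  rw [← map_pow]
  exact (MulEquiv.map_eq_one_iff e).symm

lemma torsCount_pi {ι : Type*} [Fintype ι] (M : ι → Type*) [∀ i, Monoid (M i)] (n : ℕ) :
    torsCount (∀ i, M i) n = ∏ i, torsCount (M i) n := by
  simp only [torsCount]
  rw [← Nat.card_pi]
  refine Nat.card_congr ?_
  refine (Equiv.subtypeEquivRight ?_).trans (Equiv.subtypePiEquivPi)
  intro x
  simp [funext_iff]

lemma torsCount_prod (H K : Type*) [Monoid H] [Monoid K] (n : ℕ) :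
    torsCount (H × K) n = torsCount H n * torsCount K n := by
  simp only [torsCount]
  rw [← Nat.card_prod]
  refine Nat.card_congr ?_
  refine (Equiv.subtypeEquivRight ?_).trans (Equiv.subtypeProdEquivProd)
  intro x
  simp [Prod.ext_iff, Prod.pow_def]
lemma torsCount_zmod (q n : ℕ) (hq : q ≠ 0) :
    torsCount (Multiplicative (ZMod q)) n = Nat.gcd n q := by
  haveI : NeZero q := ⟨hq⟩
  -- translate to additive kernel
  set f : ZMod q →+ ZMod q := AddMonoidHom.mulLeft (n : ZMod q) with hf
  have h1 : torsCount (Multiplicative (ZMod q)) n = Nat.card f.ker := by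
    refine Nat.card_congr (Equiv.subtypeEquiv Multiplicative.toAdd fun x => ?_)
    have : x ^ n = 1 ↔ n • x.toAdd = 0 := by
      constructor
      · intro h; rw [← toAdd_pow, h]; exact rfl
      · intro h
        have : (x ^ n).toAdd = (1 : Multiplicative (ZMod q)).toAdd := by
          rw [toAdd_pow, h]; rfl
        exact Multiplicative.toAdd.injective this
    rw [this]
    simp [AddMonoidHom.mem_ker, hf, AddMonoidHom.coe_mulLeft, nsmul_eq_mul]
  -- range of f is the cyclic subgroup generated by (n : ZMod q)
  have h2 : f.range = AddSubgroup.zmultiples ((n : ZMod q)) := by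
    ext y
    simp only [AddMonoidHom.mem_range, AddSubgroup.mem_zmultiples_iff]
    constructor
    · rintro ⟨x, rfl⟩
      exact ⟨(x.val : ℤ), by
        simp [hf, AddMonoidHom.coe_mulLeft, zsmul_eq_mul, mul_comm, ZMod.natCast_val,
          ZMod.intCast_cast, ZMod.natCast_self]⟩
    · rintro ⟨k, rfl⟩
      exact ⟨(k : ZMod q), by simp [hf, AddMonoidHom.coe_mulLeft, zsmul_eq_mul, mul_comm]⟩
  have hcr : Nat.card f.range = q / Nat.gcd q n := by
    rw [h2, Nat.card_zmultiples, ZMod.addOrderOf_coe n hq]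
  have hq' : Nat.card (ZMod q) = q := by simp [Nat.card_eq_fintype_card]
  have lag := AddSubgroup.card_eq_card_quotient_mul_card_addSubgroup (f.ker)
  have hquot : Nat.card (ZMod q ⧸ f.ker) = q / Nat.gcd q n := by
    rw [← hcr]
    exact Nat.card_congr (QuotientAddGroup.quotientKerEquivRange f).toEquiv
  rw [hq', hquot] at lag
  have hg : Nat.gcd q n ∣ q := Nat.gcd_dvd_left q n
  have hgpos : 0 < Nat.gcd q n := Nat.gcd_pos_of_pos_left n (Nat.pos_of_ne_zero hq)
  have hdiv : 0 < q / Nat.gcd q n := Nat.div_pos (Nat.le_of_dvd (Nat.pos_of_ne_zero hq) hg) hgpos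
  have : Nat.card f.ker = Nat.gcd q n := by
    have := lag
    have hqq : q / Nat.gcd q n * Nat.gcd q n = q := Nat.div_mul_cancel hg
    nlinarith [Nat.card f.ker, this]
  rw [h1, this, Nat.gcd_comm]

/-- A "1-or-prime-power" predicate. -/
def IsPP (q : ℕ) : Prop := ∃ p k, Nat.Prime p ∧ q = p ^ k

lemma IsPP.ne_zero {q : ℕ} (h : IsPP q) : q ≠ 0 := by
  obtain ⟨p, k, hp, rfl⟩ := h
  exact pow_ne_zero _ hp.pos.ne'

lemma gcd_pp_succ {p : ℕ} (hp : p.Prime) (k : ℕ) {q : ℕ} (hq : IsPP q) :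
    Nat.gcd (p ^ (k + 1)) q = Nat.gcd (p ^ k) q * (if p ^ (k + 1) ∣ q then p else 1) := by
  obtain ⟨l, m, hl, rfl⟩ := hq
  by_cases hd : p ^ (k + 1) ∣ l ^ m
  · have hpl : p = l := by
      have h1 : p ∣ l ^ m := dvd_trans (dvd_pow_self p (Nat.succ_ne_zero k)) hd
      exact (Nat.prime_dvd_prime_iff_eq hp hl).mp (hp.dvd_of_dvd_pow h1)
    subst hpl
    have hkm : k + 1 ≤ m := (Nat.pow_dvd_pow_iff_le_right hp.one_lt).mp hd
    rw [if_pos hd, Nat.gcd_eq_left (pow_dvd_pow p hkm),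
      Nat.gcd_eq_left (pow_dvd_pow p (le_trans (Nat.le_succ k) hkm)), pow_succ]
  · rw [if_neg hd, mul_one]
    by_cases hpl : p = l
    · subst hpl
      have hmk : m ≤ k := by
        by_contra hc
        exact hd ((Nat.pow_dvd_pow_iff_le_right hp.one_lt).mpr (by omega))
      rw [Nat.gcd_eq_right (pow_dvd_pow p (le_trans hmk (Nat.le_succ k))),
        Nat.gcd_eq_right (pow_dvd_pow p hmk)]
    · have hco : Nat.Coprime p l := (Nat.coprime_primes hp hl).mpr hpl
      rw [Nat.Coprime.gcd_eq_one (Nat.Coprime.pow _ _ hco), Nat.Coprime.gcd_eq_one (Nat.Coprime.pow _ _ hco)]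

lemma prod_gcd_pow_succ {ι : Type*} [Fintype ι] (f : ι → ℕ) (hf : ∀ i, IsPP (f i))
    {p : ℕ} (hp : p.Prime) (k : ℕ) :
    ∏ i, Nat.gcd (p ^ (k + 1)) (f i)
      = (∏ i, Nat.gcd (p ^ k) (f i))
        * p ^ (univ.filter (fun i => p ^ (k + 1) ∣ f i)).card := by
  have : ∀ i ∈ univ, Nat.gcd (p ^ (k + 1)) (f i)
      = Nat.gcd (p ^ k) (f i) * (if p ^ (k + 1) ∣ f i then p else 1) :=
    fun i _ => gcd_pp_succ hp k (hf i)
  rw [Finset.prod_congr rfl this, Finset.prod_mul_distrib, Finset.prod_ite, Finset.prod_const,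
    Finset.prod_const_one, mul_one]

lemma dvd_pp_iff {p : ℕ} (hp : p.Prime) (k : ℕ) {q : ℕ} (hq : IsPP q) :
    p ^ (k + 1) ∣ q ↔ (q = p ^ (k + 1) ∨ p ^ (k + 2) ∣ q) := by
  obtain ⟨l, m, hl, rfl⟩ := hq
  constructor
  · intro hd
    have hpl : p = l := by
      have h1 : p ∣ l ^ m := dvd_trans (dvd_pow_self p (Nat.succ_ne_zero k)) hd
      exact (Nat.prime_dvd_prime_iff_eq hp hl).mp (hp.dvd_of_dvd_pow h1)
    subst hpl
    have hkm : k + 1 ≤ m := (Nat.pow_dvd_pow_iff_le_right hp.one_lt).mp hd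
    rcases Nat.lt_or_ge m (k + 2) with h | h
    · exact Or.inl (by rw [show m = k + 1 by omega])
    · exact Or.inr ((Nat.pow_dvd_pow_iff_le_right hp.one_lt).mpr h)
  · rintro (h | h)
    · rw [h]
    · exact dvd_trans (pow_dvd_pow p (Nat.le_succ _)) h

lemma filter_card_split {ι : Type*} [Fintype ι] (f : ι → ℕ) (hf : ∀ i, IsPP (f i))
    {p : ℕ} (hp : p.Prime) (k : ℕ) :
    (univ.filter (fun i => p ^ (k + 1) ∣ f i)).card
      = (univ.filter (fun i => f i = p ^ (k + 1))).card
        + (univ.filter (fun i => p ^ (k + 2) ∣ f i)).card := by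
  classical
  have hsplit : univ.filter (fun i => p ^ (k + 1) ∣ f i)
      = univ.filter (fun i => f i = p ^ (k + 1)) ∪ univ.filter (fun i => p ^ (k + 2) ∣ f i) := by
    ext i
    simp only [mem_filter, mem_union, mem_univ, true_and]
    exact dvd_pp_iff hp k (hf i)
  have hdisj : Disjoint (univ.filter (fun i => f i = p ^ (k + 1)))
      (univ.filter (fun i => p ^ (k + 2) ∣ f i)) := by
    rw [Finset.disjoint_left]
    intro i h1 h2
    simp only [mem_filter, mem_univ, true_and] at h1 h2
    rw [h1] at h2
    have := (Nat.pow_dvd_pow_iff_le_right hp.one_lt).mp h2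
    omega
  rw [hsplit, Finset.card_union_of_disjoint hdisj]

lemma exists_pp_decomp (H : Type*) [CommGroup H] [Finite H] :
    ∃ (ι : Type) (_ : Fintype ι) (f : ι → ℕ), (∀ i, IsPP (f i)) ∧
      Nonempty (H ≃* ∀ i, Multiplicative (ZMod (f i))) := by
  obtain ⟨ι, hι, p, hp, n, ⟨E⟩⟩ := AddCommGroup.equiv_directSum_zmod_of_finite (Additive H)
  refine ⟨ι, hι, fun i => p i ^ n i, fun i => ⟨p i, n i, hp i, rfl⟩, ⟨?_⟩⟩
  exact MulEquiv.toAdditive.symm <| E.trans <| (DirectSum.addEquivProd _).trans <|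
    MulEquiv.toAdditiveRight <| MulEquiv.piMultiplicative _

/-- `piCongrLeft'` as a `MulEquiv`. -/
def MulEquiv.myPiCongrLeft' {α β : Type*} (P : α → Type*) [∀ a, Mul (P a)] (e : α ≃ β) :
    (∀ a, P a) ≃* ∀ b, P (e.symm b) :=
  { Equiv.piCongrLeft' P e with map_mul' := fun _ _ => rfl }

/-- `piCurry` as a `MulEquiv`. -/
def MulEquiv.myPiCurry {α : Type*} {β : α → Type*} (γ : ∀ a, β a → Type*)
    [∀ a b, Mul (γ a b)] : (∀ x : Σ a, β a, γ x.1 x.2) ≃* ∀ a, ∀ b, γ a b :=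
  { Equiv.piCurry γ with map_mul' := fun x y => by funext a b; rfl }

/-- Transport along an equality of indices. -/
def zmodCongr {a b : ℕ} (h : a = b) :
    Multiplicative (ZMod a) ≃* Multiplicative (ZMod b) := h ▸ MulEquiv.refl _

noncomputable def sortStep {ι : Type*} [Fintype ι] [DecidableEq ι] (f : ι → ℕ) :
    (∀ i, Multiplicative (ZMod (f i))) ≃*
      ∀ q : ℕ, ({i : ι // f i = q} → Multiplicative (ZMod q)) :=
  (MulEquiv.myPiCongrLeft' (fun i => Multiplicative (ZMod (f i)))
      (Equiv.sigmaFiberEquiv f).symm).trans <|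
    (MulEquiv.piCongrRight fun x : Σ q : ℕ, {i : ι // f i = q} =>
      zmodCongr (x.2.2 : f ((Equiv.sigmaFiberEquiv f) x) = x.1)).trans <|
    MulEquiv.myPiCurry (fun (q : ℕ) (_ : {i : ι // f i = q}) => Multiplicative (ZMod q))

lemma pi_congr_count {ι κ : Type*} [Fintype ι] [Fintype κ] (f : ι → ℕ) (g : κ → ℕ)
    (h : ∀ q, q ≠ 1 →
      (univ.filter (fun i => f i = q)).card = (univ.filter (fun j => g j = q)).card) :
    Nonempty ((∀ i, Multiplicative (ZMod (f i))) ≃* (∀ j, Multiplicative (ZMod (g j)))) := by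
  classical
  have E : ∀ q : ℕ, ({i : ι // f i = q} → Multiplicative (ZMod q)) ≃*
      ({j : κ // g j = q} → Multiplicative (ZMod q)) := by
    intro q
    by_cases hq : q = 1
    · subst hq
      exact MulEquiv.ofUnique
    · have hcard : Fintype.card {i : ι // f i = q} = Fintype.card {j : κ // g j = q} := by
        rw [Fintype.card_subtype, Fintype.card_subtype]
        exact h q hq
      have e := Fintype.equivOfCardEq hcard
      exact MulEquiv.myPiCongrLeft' (fun _ => Multiplicative (ZMod q)) e
  exact ⟨(sortStep f).trans ((MulEquiv.piCongrRight E).trans (sortStep g).symm)⟩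
theorem mulEquiv_of_torsCount_eq (H K : Type*) [CommGroup H] [Finite H] [CommGroup K] [Finite K]
    (h : ∀ n, torsCount H n = torsCount K n) : Nonempty (H ≃* K) := by
  classical
  obtain ⟨ι, _, f, hf, ⟨eH⟩⟩ := exists_pp_decomp H
  obtain ⟨κ, _, g, hg, ⟨eK⟩⟩ := exists_pp_decomp K
  have tf : ∀ n, torsCount H n = ∏ i, Nat.gcd n (f i) := by
    intro n
    rw [torsCount_congr eH, torsCount_pi]
    exact Finset.prod_congr rfl fun i _ => torsCount_zmod (f i) n (hf i).ne_zero
  have tg : ∀ n, torsCount K n = ∏ j, Nat.gcd n (g j) := by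
    intro n
    rw [torsCount_congr eK, torsCount_pi]
    exact Finset.prod_congr rfl fun j _ => torsCount_zmod (g j) n (hg j).ne_zero
  have hT : ∀ n, ∏ i, Nat.gcd n (f i) = ∏ j, Nat.gcd n (g j) := by
    intro n; rw [← tf, ← tg]; exact h n
  -- the filter counts for divisibility agree
  have G : ∀ p : ℕ, p.Prime → ∀ k : ℕ,
      (univ.filter (fun i => p ^ (k + 1) ∣ f i)).card
        = (univ.filter (fun j => p ^ (k + 1) ∣ g j)).card := by
    intro p hp k
    have h1 := prod_gcd_pow_succ f hf hp k
    have h2 := prod_gcd_pow_succ g hg hp k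
    rw [hT (p ^ (k + 1)), hT (p ^ k)] at h1
    rw [h1] at h2
    have hpos : 0 < ∏ j, Nat.gcd (p ^ k) (g j) :=
      Finset.prod_pos fun j _ => Nat.gcd_pos_of_pos_right _ (Nat.pos_of_ne_zero (hg j).ne_zero)
    have := Nat.eq_of_mul_eq_mul_left hpos h2
    exact Nat.pow_right_injective hp.two_le this
  have key : ∀ q, q ≠ 1 →
      (univ.filter (fun i => f i = q)).card = (univ.filter (fun j => g j = q)).card := by
    intro q hq1
    by_cases hpp : ∃ p k, Nat.Prime p ∧ q = p ^ (k + 1)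
    · obtain ⟨p, k, hp, rfl⟩ := hpp
      have e1 := filter_card_split f hf hp k
      have e2 := filter_card_split g hg hp k
      have g1 := G p hp k
      have g2 : (univ.filter (fun i => p ^ (k + 2) ∣ f i)).card
          = (univ.filter (fun j => p ^ (k + 2) ∣ g j)).card := G p hp (k + 1)
      omega
    · have hf0 : univ.filter (fun i => f i = q) = ∅ := by
        rw [Finset.filter_eq_empty_iff]
        intro i _ hiq
        obtain ⟨p, k, hp, hfi⟩ := hf i
        rcases k with _ | k
        · exact hq1 (by rw [← hiq, hfi]; rfl)
        · exact hpp ⟨p, k, hp, by rw [← hiq, hfi]⟩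
      have hg0 : univ.filter (fun j => g j = q) = ∅ := by
        rw [Finset.filter_eq_empty_iff]
        intro j _ hjq
        obtain ⟨p, k, hp, hgj⟩ := hg j
        rcases k with _ | k
        · exact hq1 (by rw [← hjq, hgj]; rfl)
        · exact hpp ⟨p, k, hp, by rw [← hjq, hgj]⟩
      rw [hf0, hg0, Finset.card_empty, Finset.card_empty]
  obtain ⟨E⟩ := pi_congr_count f g key
  exact ⟨eH.trans (E.trans eK.symm)⟩

lemma char_norm_one {H : Type*} [Group H] [Finite H] (χ : H →* ℂˣ) (x : H) :
    ‖((χ x : ℂˣ) : ℂ)‖ = 1 := by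
  refine Complex.norm_eq_one_of_pow_eq_one (n := Nat.card H) ?_ Nat.card_pos.ne'
  rw [← Units.val_pow_eq_pow_val, ← map_pow, pow_card_eq_one', map_one, Units.val_one]

lemma hasEnough (H : Type*) [CommGroup H] [Finite H] :
    HasEnoughRootsOfUnity ℂ (Monoid.exponent H) := by
  haveI : NeZero ((Monoid.exponent H : ℂ)) :=
    ⟨Nat.cast_ne_zero.mpr Monoid.exponent_ne_zero_of_finite⟩
  infer_instance

lemma pair_separates {H : Type*} [CommGroup H] [Finite H] (z : H × (H →* ℂˣ))
    (hz : ∀ y : H × (H →* ℂˣ), z.2 y.1 * y.2 z.1 = 1) : z = 1 := by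
  haveI := hasEnough H
  have hχ : z.2 = 1 := MonoidHom.ext fun hx => by simpa using hz (hx, 1)
  have hg : z.1 = 1 := by
    by_contra hne
    obtain ⟨φ, hφ⟩ := CommGroup.exists_apply_ne_one_of_hasEnoughRootsOfUnity H ℂ hne
    exact hφ (by simpa using hz (1, φ))
  exact Prod.ext hg hχ


/-- If the S̃-matrices of the quantum doubles of finite abelian groups `G`, `G'`,
with entries `S̃_{(g,χ),(g',χ')} = (1/|G|²) χ(g') χ'(g)` indexed by anyons
`(g,χ) ∈ G × Ĝ`, agree up to a simultaneous permutation of rows and columns,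
then `G ≅ G'`. -/
theorem tilde_S_determines_abelian_group
    (G G' : Type*) [CommGroup G] [Fintype G] [CommGroup G'] [Fintype G']
    (e : (G × (G →* ℂˣ)) ≃ (G' × (G' →* ℂˣ)))
    (he : ∀ a b : G × (G →* ℂˣ),
      ((1 : ℂ) / (Fintype.card G : ℂ) ^ 2) * (a.2 b.1 : ℂ) * (b.2 a.1 : ℂ)
        = ((1 : ℂ) / (Fintype.card G' : ℂ) ^ 2)
            * ((e a).2 (e b).1 : ℂ) * ((e b).2 (e a).1 : ℂ)) :
    Nonempty (G ≃* G') := by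
  classical
  -- Step 1: the two groups have the same cardinality
  have hcardN : Fintype.card G = Fintype.card G' := by
    have key1 := congrArg norm (he 1 1)
    simp only [Prod.fst_one, Prod.snd_one, MonoidHom.one_apply, Units.val_one, mul_one,
      norm_mul, norm_div, norm_one, norm_pow, Complex.norm_natCast, char_norm_one] at key1
    field_simp at key1
    have hG : (0:ℝ) < Fintype.card G := by exact_mod_cast Fintype.card_pos
    have hG' : (0:ℝ) < Fintype.card G' := by exact_mod_cast Fintype.card_pos
    exact_mod_cast ((pow_left_inj₀ hG'.le hG.le two_ne_zero).mp key1).symm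
  -- Step 2: the pairing is preserved on the nose
  have hB : ∀ a b : G × (G →* ℂˣ),
      ((a.2 b.1 : ℂˣ) : ℂ) * ((b.2 a.1 : ℂˣ) : ℂ)
        = (((e a).2 (e b).1 : ℂˣ) : ℂ) * (((e b).2 (e a).1 : ℂˣ) : ℂ) := by
    intro a b
    have h := he a b
    rw [hcardN] at h
    have hne : ((1 : ℂ) / (Fintype.card G' : ℂ) ^ 2) ≠ 0 :=
      one_div_ne_zero (pow_ne_zero 2 (Nat.cast_ne_zero.mpr Fintype.card_pos.ne'))
    rw [mul_assoc, mul_assoc] at h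
    exact mul_left_cancel₀ hne h
  -- Step 3: `e` is multiplicative
  have hmul : ∀ a b, e (a * b) = e a * e b := by
    intro a b
    have key : ∀ y : G' × (G' →* ℂˣ),
        (e (a * b) * (e a * e b)⁻¹).2 y.1 * y.2 ((e (a * b) * (e a * e b)⁻¹).1) = 1 := by
      intro y
      obtain ⟨x, rfl⟩ : ∃ x, e x = y := ⟨e.symm y, e.apply_symm_apply y⟩
      have h1 := hB (a * b) x
      have h2 := hB a x
      have h3 := hB b x
      simp only [Prod.fst_mul, Prod.snd_mul, MonoidHom.mul_apply, map_mul, Units.val_mul] at h1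
      apply Units.ext
      simp only [Prod.fst_mul, Prod.snd_mul, Prod.fst_inv, Prod.snd_inv, MonoidHom.mul_apply,
        MonoidHom.inv_apply, map_mul, map_inv, Units.val_mul, Units.val_inv_eq_inv_val,
        Units.val_one]
      have u2 : (((e a).2 (e x).1 : ℂˣ) : ℂ) ≠ 0 := Units.ne_zero _
      have u3 : (((e b).2 (e x).1 : ℂˣ) : ℂ) ≠ 0 := Units.ne_zero _
      have v2 : (((e x).2 (e a).1 : ℂˣ) : ℂ) ≠ 0 := Units.ne_zero _
      have v3 : (((e x).2 (e b).1 : ℂˣ) : ℂ) ≠ 0 := Units.ne_zero _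
      field_simp
      linear_combination (-1 : ℂ) * h1
        + (((b.2 x.1 : ℂˣ) : ℂ) * ((x.2 b.1 : ℂˣ) : ℂ)) * h2
        + ((((e a).2 (e x).1 : ℂˣ) : ℂ) * (((e x).2 (e a).1 : ℂˣ) : ℂ)) * h3
    have := pair_separates _ key
    exact mul_inv_eq_one.mp this
  let Φ : (G × (G →* ℂˣ)) ≃* (G' × (G' →* ℂˣ)) := MulEquiv.mk' e hmul
  -- Step 4: duality and torsion counts
  haveI := hasEnough G
  haveI := hasEnough G'
  obtain ⟨dG⟩ := CommGroup.monoidHom_mulEquiv_of_hasEnoughRootsOfUnity G ℂ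
  obtain ⟨dG'⟩ := CommGroup.monoidHom_mulEquiv_of_hasEnoughRootsOfUnity G' ℂ
  have ht : ∀ n, torsCount G n = torsCount G' n := by
    intro n
    have h1 : torsCount (G × (G →* ℂˣ)) n = torsCount (G' × (G' →* ℂˣ)) n :=
      torsCount_congr Φ n
    rw [torsCount_prod, torsCount_prod, torsCount_congr dG n, torsCount_congr dG' n] at h1
    exact Nat.mul_self_inj.mp h1
  exact mulEquiv_of_torsCount_eq G G' ht
end
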